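/- Let (λ, u) satisfy a(u,v) = λ b(u,v) for all v ∈ V_c with b(u,u) = 1, and let (λ_h, u_h) satisfy a_w(u_h, v_h) = λ_h b(u_h, v_h) for all v_h ∈ V_h with b(u_h, u_h) = 1. Let Q_h : V → V_h be a linear operator satisfying Q_h v_h = v_h for all v_h ∈ V_h and b(Q_h w, v_h) = b(w, v_h) for all w ∈ V, v_h ∈ V_h. Then λ − λ_h = a(u,u) − a_w(Q_h u, Q_h u) + a_w(u_h − Q_h u, u_h − Q_h u) − λ_h b(u − u_h, u − u_h). -/
import Mathlib

/-- Key algebraic eigenvalue-difference identity of the abstract WG framework: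
for exact eigenpair `(lam, u)` on `Vc` and discrete eigenpair `(lamh, uh)` on
`Vh`, with `Qh` the projection-type operator onto `Vh`,
`lam - lamh = (a u u - aw (Qh u) (Qh u)) + aw (uh - Qh u) (uh - Qh u)
  - lamh * b (u - uh) (u - uh)`. -/
theorem stmt_3 {V : Type*} [NormedAddCommGroup V] [Module ℝ V]
    (Vc Vh : Set V)
    (a aw b : V →ₗ[ℝ] V →ₗ[ℝ] ℝ)
    (hasym : ∀ u v : V, a u v = a v u)
    (hawsym : ∀ u v : V, aw u v = aw v u)
    (hbsym : ∀ u v : V, b u v = b v u)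
    (lam lamh : ℝ) (u uh : V)
    (hu : u ∈ Vc) (huh : uh ∈ Vh)
    (heig : ∀ v ∈ Vc, a u v = lam * b u v) (hnorm : b u u = 1)
    (heigh : ∀ v ∈ Vh, aw uh v = lamh * b uh v) (hnormh : b uh uh = 1)
    (Qh : V →ₗ[ℝ] V)
    (hQmem : ∀ w : V, Qh w ∈ Vh)
    (hQid : ∀ v ∈ Vh, Qh v = v)
    (hQb : ∀ w : V, ∀ v ∈ Vh, b (Qh w) v = b w v) :
    lam - lamh =
      (a u u - aw (Qh u) (Qh u)) + aw (uh - Qh u) (uh - Qh u)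
        - lamh * b (u - uh) (u - uh) := by
  have hauu : a u u = lam := by rw [heig u hu, hnorm]; ring
  have h1 : aw uh uh = lamh := by rw [heigh uh huh, hnormh]; ring
  have h2 : aw uh (Qh u) = lamh * b u uh := by
    rw [heigh (Qh u) (hQmem u), hbsym, hQb u uh huh]
  have h3 : aw (Qh u) uh = lamh * b u uh := by rw [hawsym]; exact h2
  have h4 : b (u - uh) (u - uh) = 2 - 2 * b u uh := by
    simp only [map_sub, LinearMap.sub_apply, hnorm, hnormh, hbsym uh u]
    ring
  have h5 : aw (uh - Qh u) (uh - Qh u)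
      = aw uh uh - aw uh (Qh u) - aw (Qh u) uh + aw (Qh u) (Qh u) := by
    simp only [map_sub, LinearMap.sub_apply]; ring
  rw [h5, h4, h1, h2, h3, hauu]; ring
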